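/- arXiv:2007.06633 — 2 statements merged into one kernel-verified Lean document; each statement's English description precedes it below -/
import Mathlib

section
/- Let N₁, N₂ ∈ ℕ, let M be a real N₂ × N₁ matrix, and let f : [0,1] → ℝ^{N₁} be continuous. Then for every multi-index J = (j_1,…,j_m) with entries in {1,…,N₂}, S^J(M∘f) = Σ_{i_1=1}^{N₁} ⋯ Σ_{i_m=1}^{N₁} S^{(i_1,…,i_m)}(f) · M_{j_1,i_1} M_{j_2,i_2} ⋯ M_{j_m,i_m}, where (M∘f)(t) = M·f(t). (Equivariance of the path signature under Lie group homomorphisms: S(Fγ) = F_* S(γ), where F_* is the induced linear map between Lie algebras acting diagonally on each tensor level.) -/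
/-!
Expanding each factor `(M f(t_j))_{J_j} = ∑_i M_{J_j,i} f_i(t_j)` and multiplying out turns the
integrand of `S^J(M∘f)` into a finite sum over multi-indices `i`; the integral splits along this
sum because every integrand `∏_j f_{i_j}(t_j)` is continuous on the compact simplex.
-/

open MeasureTheory

/-- The simplex of nondecreasing `m`-tuples with entries in `[0,1]`. -/
def simplex (m : ℕ) : Set (Fin m → ℝ) :=
  {t | (∀ j, t j ∈ Set.Icc (0:ℝ) 1) ∧ ∀ j k : Fin m, j ≤ k → t j ≤ t k}

/-- The signature coefficient of `f : [0,1] → ℝ^N` with respect to a multi-index. -/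
noncomputable def sig {N : ℕ} (f : ℝ → Fin N → ℝ) {m : ℕ} (I : Fin m → Fin N) : ℝ :=
  ∫ t in simplex m, ∏ j, f (t j) (I j)

theorem Matrix.prod_mulVec_apply {R ι κ μ : Type*} [CommSemiring R] [Fintype κ] [Fintype μ]
    [DecidableEq μ] (M : Matrix ι κ R) (v : μ → κ → R) (J : μ → ι) :
    ∏ j, M.mulVec (v j) (J j) = ∑ i : μ → κ, (∏ j, v j (i j)) * ∏ j, M (J j) (i j) := by
  simp only [Matrix.mulVec, dotProduct, Finset.prod_univ_sum, Fintype.piFinset_univ,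
    ← Finset.prod_mul_distrib, mul_comm]

theorem simplex_subset_Icc (m : ℕ) : simplex m ⊆ Set.Icc 0 1 :=
  fun _ ht => ⟨fun j => (ht.1 j).1, fun j => (ht.1 j).2⟩

theorem isClosed_simplex (m : ℕ) : IsClosed (simplex m) := by
  simp only [simplex, Set.ofPred_and, Set.ofPred_forall]
  exact (isClosed_iInter fun j => isClosed_Icc.preimage (continuous_apply j)).inter
    (isClosed_iInter fun j => isClosed_iInter fun k => isClosed_iInter fun _ =>
      isClosed_le (continuous_apply j) (continuous_apply k))

theorem isCompact_simplex (m : ℕ) : IsCompact (simplex m) :=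
  isCompact_Icc.of_isClosed_subset (isClosed_simplex m) (simplex_subset_Icc m)

theorem integrableOn_prod_simplex {N m : ℕ} {f : ℝ → Fin N → ℝ}
    (hf : ContinuousOn f (Set.Icc 0 1)) (i : Fin m → Fin N) :
    IntegrableOn (fun t : Fin m → ℝ => ∏ j, f (t j) (i j)) (simplex m) := by
  refine ContinuousOn.integrableOn_compact (isCompact_simplex m) ?_
  refine continuousOn_finsetProd _ fun j _ => ?_
  exact (continuous_apply (i j)).comp_continuousOn
    (hf.comp (continuous_apply j).continuousOn fun t ht => ht.1 j)

/-- **Equivariance of the path signature under linear maps** (induced by Lie group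
homomorphisms): for a matrix `M : ℝ^{N₁} → ℝ^{N₂}` and a multi-index
`J = (j_1,…,j_m)` in `{1,…,N₂}`,
`S^J(M∘f) = Σ_{i_1,…,i_m} S^{(i_1,…,i_m)}(f) · M_{j_1 i_1} ⋯ M_{j_m i_m}`. -/
theorem signature_equivariance (N₁ N₂ : ℕ) (M : Matrix (Fin N₂) (Fin N₁) ℝ)
    (f : ℝ → Fin N₁ → ℝ) (hf : ContinuousOn f (Set.Icc 0 1))
    (m : ℕ) (J : Fin m → Fin N₂) :
    sig (fun t => M.mulVec (f t)) J =
      ∑ i : Fin m → Fin N₁, sig f i * ∏ p, M (J p) (i p) := by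
  unfold sig
  rw [setIntegral_congr_fun (isClosed_simplex m).measurableSet
      fun t _ => M.prod_mulVec_apply (fun j => f (t j)) J,
    integral_finsetSum _ fun i _ => (integrableOn_prod_simplex hf i).mul_const _]
  simp only [integral_mul_const]
end

section
/- Let N, M ∈ ℕ with M ≥ 1 and let f, g : [0,1] → ℝ^N be continuous. Define Q_1(s,t) := 1 + ∫_{[0,s]×[0,t]} ⟨f(s'), g(t')⟩ ds' dt' and, recursively for 2 ≤ m ≤ M, Q_m(s,t) := 1 + ∫_{[0,s]×[0,t]} Q_{m-1}(s',t') ⟨f(s'), g(t')⟩ ds' dt'. Then Q_M(1,1) = Σ_{m=0}^{M} ∫_{Δ^m × Δ^m} ∏_{i=1}^{m} ⟨f(s_i), g(t_i)⟩ ds dt = K_M(f,g), the signature kernel truncated at level M. (Horner-type recursion for efficient computation of the signature kernel.) -/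
open MeasureTheory

/-- The Horner-type recursion for the signature kernel:
`Q 0 = 1` and `Q (m+1) (s,t) = 1 + ∫_{[0,s]×[0,t]} Q m (s',t') ⟨f(s'), g(t')⟩ ds' dt'`,
so that `Q 1 (s,t) = 1 + ∫_{[0,s]×[0,t]} ⟨f(s'), g(t')⟩ ds' dt'`. -/
noncomputable def Qker {N : ℕ} (f g : ℝ → Fin N → ℝ) : ℕ → ℝ → ℝ → ℝ
  | 0, _, _ => 1
  | m + 1, s, t =>
      1 + ∫ p in (Set.Icc (0:ℝ) s) ×ˢ (Set.Icc (0:ℝ) t),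
            Qker f g m p.1 p.2 * ∑ c, f p.1 c * g p.2 c

/-! Write `S^I_{[0,s]}(f)` for the signature coefficient of `f` over `[0,s]` (`sigCoeff`).
Expanding `∏ᵢ ⟨f(sᵢ), g(tᵢ)⟩` over multi-indices separates the level-`m` term of the kernel as
`Σ_{|I|=m} S^I_{[0,s]}(f) S^I_{[0,t]}(g)` (`levelKernel`). Slicing the simplex along its last
coordinate gives `S^{Ic}_{[0,s]}(f) = ∫₀ˢ f_c(u) S^I_{[0,u]}(f) du`, so integrating the level-`m`
term against `⟨f(s'), g(t')⟩` over `[0,s] × [0,t]` yields the level-`(m+1)` term, and by induction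
`Q_m(s,t)` is the sum of the levels `0, …, m`. Continuity on `[0,1]` suffices after extending `f`
and `g` continuously to `ℝ`. -/

open Set

def scaledSimplex (m : ℕ) (s : ℝ) : Set (Fin m → ℝ) :=
  {t | (∀ j, t j ∈ Icc 0 s) ∧ ∀ j k : Fin m, j ≤ k → t j ≤ t k}

theorem isClosed_scaledSimplex (m : ℕ) (s : ℝ) : IsClosed (scaledSimplex m s) := by
  simp only [scaledSimplex, ofPred_and, ofPred_forall]
  exact (isClosed_iInter fun j => isClosed_Icc.preimage (continuous_apply j)).inter
    (isClosed_iInter fun j => isClosed_iInter fun k => isClosed_iInter fun _ =>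
      isClosed_le (continuous_apply j) (continuous_apply k))

theorem isCompact_scaledSimplex (m : ℕ) (s : ℝ) : IsCompact (scaledSimplex m s) :=
  (isCompact_univ_pi fun _ => isCompact_Icc).of_isClosed_subset (isClosed_scaledSimplex m s)
    fun _ ht j _ => ht.1 j

theorem scaledSimplex_zero (s : ℝ) : scaledSimplex 0 s = univ :=
  eq_univ_of_forall fun _ => ⟨finZeroElim, finZeroElim⟩

theorem snoc_mem_scaledSimplex_succ_iff {k : ℕ} {s u : ℝ} {y : Fin k → ℝ} :
    (Fin.snoc y u : Fin (k + 1) → ℝ) ∈ scaledSimplex (k + 1) s ↔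
      u ∈ Icc 0 s ∧ y ∈ scaledSimplex k u := by
  simp only [scaledSimplex, mem_ofPred_eq, Fin.forall_fin_succ', Fin.snoc_castSucc,
    Fin.snoc_last, Fin.castSucc_le_castSucc_iff, Fin.last_le_iff, mem_Icc, Fin.le_last,
    Fin.castSucc_ne_last, true_implies, false_implies, implies_true, le_refl, and_true]
  constructor
  · rintro ⟨⟨hy, hu⟩, hmono⟩
    exact ⟨hu, fun j => ⟨(hy j).1, (hmono j).2⟩, fun j => (hmono j).1⟩
  · rintro ⟨hu, hy, hmono⟩
    exact ⟨⟨fun j => ⟨(hy j).1, (hy j).2.trans hu.2⟩, hu⟩, fun j => ⟨hmono j, (hy j).2⟩⟩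

theorem setIntegral_scaledSimplex_succ {k : ℕ} {s : ℝ} {φ : (Fin (k + 1) → ℝ) → ℝ}
    (hφ : IntegrableOn φ (scaledSimplex (k + 1) s)) :
    ∫ t in scaledSimplex (k + 1) s, φ t =
      ∫ u in Icc 0 s, ∫ y in scaledSimplex k u, φ (Fin.snoc y u) := by
  set e := MeasurableEquiv.piFinSuccAbove (fun _ : Fin (k + 1) => ℝ) (Fin.last k)
  have he : MeasurePreserving e.symm volume volume :=
    (volume_preserving_piFinSuccAbove (fun _ : Fin (k + 1) => ℝ) (Fin.last k)).symm e
  have he_apply (p : ℝ × (Fin k → ℝ)) : e.symm p = Fin.snoc p.2 p.1 := by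
    simp [e, MeasurableEquiv.piFinSuccAbove, Fin.snocEquiv]
  set S := scaledSimplex (k + 1) s
  have hS : MeasurableSet S := (isClosed_scaledSimplex _ _).measurableSet
  set ψ : ℝ → (Fin k → ℝ) → ℝ := fun u => (scaledSimplex k u).indicator fun y => φ (Fin.snoc y u)
  have h_slice (p : ℝ × (Fin k → ℝ)) :
      S.indicator φ (e.symm p) = (Icc 0 s).indicator ψ p.1 p.2 := by
    by_cases hu : p.1 ∈ Icc 0 s <;> by_cases hy : p.2 ∈ scaledSimplex k p.1 <;>
      simp [ψ, S, indicator, he_apply, snoc_mem_scaledSimplex_succ_iff, hu, hy]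
  have h_int : Integrable (fun p : ℝ × (Fin k → ℝ) => (Icc 0 s).indicator ψ p.1 p.2)
      (volume.prod volume) := by
    rw [← Measure.volume_eq_prod]
    simpa only [Function.comp_def, h_slice] using
      (he.integrable_comp_emb e.symm.measurableEmbedding).2 ((integrable_indicator_iff hS).2 hφ)
  calc ∫ t in S, φ t = ∫ p, S.indicator φ (e.symm p) := by
        rw [← integral_indicator hS, he.integral_comp']
    _ = ∫ u, ∫ y, (Icc 0 s).indicator ψ u y := by
        simp_rw [h_slice]
        rw [Measure.volume_eq_prod, integral_prod _ h_int]
    _ = ∫ u, (Icc 0 s).indicator (fun u => ∫ y, ψ u y) u := by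
        congr 1 with u
        by_cases hu : u ∈ Icc 0 s <;> simp [hu]
    _ = ∫ u in Icc 0 s, ∫ y in scaledSimplex k u, φ (Fin.snoc y u) := by
        rw [integral_indicator measurableSet_Icc]
        simp only [ψ, integral_indicator (isClosed_scaledSimplex _ _).measurableSet]

noncomputable def iteratedIntegral {m : ℕ} (H : Fin m → ℝ → ℝ) (s : ℝ) : ℝ :=
  ∫ t in scaledSimplex m s, ∏ j, H j (t j)

theorem iteratedIntegral_zero (H : Fin 0 → ℝ → ℝ) (s : ℝ) : iteratedIntegral H s = 1 := by
  simp [iteratedIntegral, scaledSimplex_zero, measureReal_def, volume_pi]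

theorem iteratedIntegral_succ {k : ℕ} {H : Fin (k + 1) → ℝ → ℝ} (hH : ∀ j, Continuous (H j))
    (s : ℝ) :
    iteratedIntegral H s =
      ∫ u in Icc 0 s, H (Fin.last k) u * iteratedIntegral (fun j => H j.castSucc) u := by
  have h_int : IntegrableOn (fun t => ∏ j, H j (t j)) (scaledSimplex (k + 1) s) :=
    (continuous_finsetProd _ fun j _ => (hH j).comp (continuous_apply j)).continuousOn
      |>.integrableOn_compact (isCompact_scaledSimplex _ _)
  rw [iteratedIntegral, setIntegral_scaledSimplex_succ h_int]
  congr 1 with u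
  simp only [Fin.prod_univ_castSucc, Fin.snoc_castSucc, Fin.snoc_last, iteratedIntegral,
    ← integral_const_mul]
  simp only [mul_comm]

theorem continuousOn_iteratedIntegral {m : ℕ} {H : Fin m → ℝ → ℝ} (hH : ∀ j, Continuous (H j))
    (b : ℝ) : ContinuousOn (iteratedIntegral H) (Icc 0 b) := by
  induction m with
  | zero => simpa only [funext (iteratedIntegral_zero H)] using continuousOn_const
  | succ k ih =>
    have h_int : IntegrableOn
        (fun u => H (Fin.last k) u * iteratedIntegral (fun j => H j.castSucc) u) (Icc 0 b) :=
      ((hH _).continuousOn.mul (ih fun j => hH _)).integrableOn_Icc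
    simpa only [← iteratedIntegral_succ hH] using intervalIntegral.continuousOn_primitive_Icc h_int

theorem integrableOn_prod_mul {α β : Type*} [MeasurableSpace α] [MeasurableSpace β]
    {μ : Measure α} {ν : Measure β} [SFinite μ] [SFinite ν] {f : α → ℝ} {g : β → ℝ}
    {s : Set α} {t : Set β}
    (hf : IntegrableOn f s μ) (hg : IntegrableOn g t ν) :
    IntegrableOn (fun p : α × β => f p.1 * g p.2) (s ×ˢ t) (μ.prod ν) := by
  rw [IntegrableOn, ← Measure.prod_restrict]
  exact Integrable.mul_prod hf hg

section SignatureKernel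

variable {N : ℕ}

noncomputable def sigCoeff (F : ℝ → Fin N → ℝ) {m : ℕ} (I : Fin m → Fin N) (s : ℝ) : ℝ :=
  iteratedIntegral (fun j u => F u (I j)) s

theorem sig_eq_sigCoeff (F : ℝ → Fin N → ℝ) {m : ℕ} (I : Fin m → Fin N) :
    sig F I = sigCoeff F I 1 :=
  rfl

theorem sigCoeff_snoc {F : ℝ → Fin N → ℝ} (hF : Continuous F) {m : ℕ} (I : Fin m → Fin N)
    (c : Fin N) (s : ℝ) :
    sigCoeff F (Fin.snoc I c : Fin (m + 1) → Fin N) s =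
      ∫ u in Icc 0 s, F u c * sigCoeff F I u := by
  have hH (j : Fin (m + 1)) : Continuous fun u => F u ((Fin.snoc I c : Fin (m + 1) → Fin N) j) :=
    (continuous_apply _).comp hF
  rw [sigCoeff, iteratedIntegral_succ hH]
  simp only [Fin.snoc_last, Fin.snoc_castSucc, sigCoeff]

theorem integrableOn_mul_sigCoeff {F : ℝ → Fin N → ℝ} (hF : Continuous F) {m : ℕ}
    (I : Fin m → Fin N) (c : Fin N) (s : ℝ) :
    IntegrableOn (fun u => F u c * sigCoeff F I u) (Icc 0 s) :=
  ((continuous_apply c).comp hF).continuousOn.mul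
    (continuousOn_iteratedIntegral (fun _ => (continuous_apply _).comp hF) s) |>.integrableOn_Icc

noncomputable def levelKernel (F G : ℝ → Fin N → ℝ) (m : ℕ) (s t : ℝ) : ℝ :=
  ∑ I : Fin m → Fin N, sigCoeff F I s * sigCoeff G I t

theorem levelKernel_zero (F G : ℝ → Fin N → ℝ) (s t : ℝ) : levelKernel F G 0 s t = 1 := by
  simp [levelKernel, sigCoeff, iteratedIntegral_zero]

theorem levelKernel_succ (F G : ℝ → Fin N → ℝ) (m : ℕ) (s t : ℝ) :
    levelKernel F G (m + 1) s t =
      ∑ I : Fin m → Fin N, ∑ c, sigCoeff F (Fin.snoc I c : Fin (m + 1) → Fin N) s *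
        sigCoeff G (Fin.snoc I c : Fin (m + 1) → Fin N) t := by
  rw [levelKernel, ← (Fin.snocEquiv fun _ => Fin N).sum_comp, Fintype.sum_prod_type,
    Finset.sum_comm]
  rfl

theorem levelKernel_mul_inner (F G : ℝ → Fin N → ℝ) (m : ℕ) (s t : ℝ) :
    levelKernel F G m s t * ∑ c, F s c * G t c =
      ∑ I : Fin m → Fin N, ∑ c, (F s c * sigCoeff F I s) * (G t c * sigCoeff G I t) := by
  rw [levelKernel, Finset.sum_mul]
  refine Finset.sum_congr rfl fun I _ => ?_
  rw [Finset.mul_sum]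
  exact Finset.sum_congr rfl fun c _ => by ring

variable {F G : ℝ → Fin N → ℝ} (hF : Continuous F) (hG : Continuous G)
include hF hG

theorem integrableOn_levelKernel_mul_inner (m : ℕ) (s t : ℝ) :
    IntegrableOn (fun p : ℝ × ℝ => levelKernel F G m p.1 p.2 * ∑ c, F p.1 c * G p.2 c)
      (Icc 0 s ×ˢ Icc 0 t) := by
  simp only [levelKernel_mul_inner]
  exact integrable_finsetSum _ fun I _ => integrable_finsetSum _ fun c _ =>
    integrableOn_prod_mul (integrableOn_mul_sigCoeff hF I c s) (integrableOn_mul_sigCoeff hG I c t)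

theorem setIntegral_levelKernel_mul_inner (m : ℕ) (s t : ℝ) :
    ∫ p in Icc 0 s ×ˢ Icc 0 t, levelKernel F G m p.1 p.2 * ∑ c, F p.1 c * G p.2 c =
      levelKernel F G (m + 1) s t := by
  have h_int (I : Fin m → Fin N) (c : Fin N) :=
    integrableOn_prod_mul (integrableOn_mul_sigCoeff hF I c s) (integrableOn_mul_sigCoeff hG I c t)
  simp only [levelKernel_mul_inner]
  rw [Measure.volume_eq_prod,
    integral_finsetSum _ fun I _ => integrable_finsetSum _ fun c _ => h_int I c,
    levelKernel_succ]
  refine Finset.sum_congr rfl fun I _ => ?_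
  rw [integral_finsetSum _ fun c _ => h_int I c]
  refine Finset.sum_congr rfl fun c _ => ?_
  rw [setIntegral_prod_mul (fun u => F u c * sigCoeff F I u) (fun u => G u c * sigCoeff G I u),
    sigCoeff_snoc hF, sigCoeff_snoc hG]

theorem Qker_eq_sum_levelKernel (m : ℕ) (s t : ℝ) :
    Qker F G m s t = ∑ k ∈ Finset.range (m + 1), levelKernel F G k s t := by
  induction m generalizing s t with
  | zero => simp [Qker, levelKernel_zero]
  | succ m ih =>
    simp only [Qker, ih, Finset.sum_mul]
    rw [integral_finsetSum _ fun k _ => integrableOn_levelKernel_mul_inner hF hG k s t]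
    simp only [setIntegral_levelKernel_mul_inner hF hG]
    rw [Finset.sum_range_succ' _ (m + 1), levelKernel_zero, add_comm]

theorem setIntegral_simplex_prod_eq_levelKernel (m : ℕ) :
    ∫ p in simplex m ×ˢ simplex m, ∏ i, ∑ c, F (p.1 i) c * G (p.2 i) c =
      levelKernel F G m 1 1 := by
  have h_int {H : ℝ → Fin N → ℝ} (hH : Continuous H) (I : Fin m → Fin N) :
      IntegrableOn (fun x : Fin m → ℝ => ∏ i, H (x i) (I i)) (simplex m) :=
    (continuous_finsetProd _ fun i _ => ((continuous_apply _).comp hH).comp (continuous_apply i))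
      |>.continuousOn.integrableOn_compact (isCompact_scaledSimplex m 1)
  simp only [Fintype.prod_sum, Finset.prod_mul_distrib]
  rw [Measure.volume_eq_prod,
    integral_finsetSum _ fun I _ => integrableOn_prod_mul (h_int hF I) (h_int hG I)]
  exact Finset.sum_congr rfl fun I _ =>
    setIntegral_prod_mul (fun x : Fin m → ℝ => ∏ i, F (x i) (I i))
      (fun y : Fin m → ℝ => ∏ i, G (y i) (I i)) _ _

end SignatureKernel

theorem ContinuousOn.exists_continuous_eqOn_Icc {α β : Type*} [LinearOrder α]
    [TopologicalSpace α] [OrderTopology α] [TopologicalSpace β] {a b : α} (hab : a ≤ b)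
    {f : α → β} (hf : ContinuousOn f (Icc a b)) : ∃ F : α → β, Continuous F ∧ EqOn f F (Icc a b) :=
  ⟨IccExtend hab ((Icc a b).domRestrict f), hf.domRestrict.Icc_extend',
    fun _ hx => (IccExtend_of_mem hab ((Icc a b).domRestrict f) hx).symm⟩

section Congr

variable {N : ℕ} {f g F G : ℝ → Fin N → ℝ} (hf : EqOn f F (Icc 0 1))
include hf

theorem sig_congr {m : ℕ} (I : Fin m → Fin N) : sig f I = sig F I :=
  setIntegral_congr_fun (isClosed_scaledSimplex m 1).measurableSet fun _ ht =>
    Finset.prod_congr rfl fun j _ => by rw [hf (ht.1 j)]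

variable (hg : EqOn g G (Icc 0 1))
include hg

theorem setIntegral_simplex_prod_congr (m : ℕ) :
    ∫ p in simplex m ×ˢ simplex m, ∏ i, ∑ c, f (p.1 i) c * g (p.2 i) c =
      ∫ p in simplex m ×ˢ simplex m, ∏ i, ∑ c, F (p.1 i) c * G (p.2 i) c := by
  have hS := (isClosed_scaledSimplex m 1).measurableSet
  refine setIntegral_congr_fun (hS.prod hS) fun p hp => ?_
  simp only [hf (hp.1.1 _), hg (hp.2.1 _)]

theorem Qker_congr (m : ℕ) {s t : ℝ} (hs : s ≤ 1) (ht : t ≤ 1) :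
    Qker f g m s t = Qker F G m s t := by
  induction m generalizing s t with
  | zero => rfl
  | succ m ih =>
    simp only [Qker]
    congr 1
    refine setIntegral_congr_fun (measurableSet_Icc.prod measurableSet_Icc) fun p hp => ?_
    simp only [ih (hp.1.2.trans hs) (hp.2.2.trans ht), hf ⟨hp.1.1, hp.1.2.trans hs⟩,
      hg ⟨hp.2.1, hp.2.2.trans ht⟩]

end Congr

theorem signature_kernel_horner_general (N M : ℕ) (f g : ℝ → Fin N → ℝ)
    (hf : ContinuousOn f (Set.Icc 0 1)) (hg : ContinuousOn g (Set.Icc 0 1)) :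
    Qker f g M 1 1 =
      (∑ m ∈ Finset.range (M + 1),
        ∫ p in (simplex m) ×ˢ (simplex m),
          ∏ i, ∑ c, f (p.1 i) c * g (p.2 i) c) ∧
    Qker f g M 1 1 =
      ∑ m ∈ Finset.range (M + 1), ∑ I : Fin m → Fin N, sig f I * sig g I := by
  obtain ⟨F, hF, hfF⟩ := hf.exists_continuous_eqOn_Icc zero_le_one
  obtain ⟨G, hG, hgG⟩ := hg.exists_continuous_eqOn_Icc zero_le_one
  rw [Qker_congr hfF hgG M le_rfl le_rfl, Qker_eq_sum_levelKernel hF hG]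
  refine ⟨Finset.sum_congr rfl fun m _ => ?_, Finset.sum_congr rfl fun m _ => ?_⟩
  · rw [setIntegral_simplex_prod_congr hfF hgG, setIntegral_simplex_prod_eq_levelKernel hF hG]
  · simp only [sig_congr hfF, sig_congr hgG, sig_eq_sigCoeff, levelKernel]

/-- **Horner-type recursion computes the truncated signature kernel**:
`Q_M(1,1) = Σ_{m=0}^M ∫_{Δ^m × Δ^m} ∏_i ⟨f(s_i), g(t_i)⟩ ds dt
          = Σ_{m=0}^M Σ_{|I|=m} S^I(f) S^I(g) = K_M(f,g)`. -/
theorem signature_kernel_horner (N M : ℕ) (hM : 1 ≤ M) (f g : ℝ → Fin N → ℝ)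
    (hf : ContinuousOn f (Set.Icc 0 1)) (hg : ContinuousOn g (Set.Icc 0 1)) :
    Qker f g M 1 1 =
      (∑ m ∈ Finset.range (M + 1),
        ∫ p in (simplex m) ×ˢ (simplex m),
          ∏ i, ∑ c, f (p.1 i) c * g (p.2 i) c) ∧
    Qker f g M 1 1 =
      ∑ m ∈ Finset.range (M + 1), ∑ I : Fin m → Fin N, sig f I * sig g I :=
  signature_kernel_horner_general N M f g hf hg
end
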